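/- Let k be a field of positive characteristic ℓ, and let ξ ∈ k be a nonzero element such that e := e(ξ) = min{i ≥ 2 : 1 + ξ + ξ² + ⋯ + ξ^{i−1} = 0} exists. Let d₁, …, d_n be positive integers such that e·ℓ does not divide any d_j. If f ≥ 2 is a natural number such that the image of Φ_f at ξ vanishes in k and Φ_f divides the polynomial ∏_{j=1}^{n} (1 + X + X² + ⋯ + X^{d_j − 1}) in ℤ[X], then f = e. -/

import Mathlib

/-! Write `f = ℓ^a m` with `ℓ ∤ m`. In characteristic `ℓ` the roots of `Φ_f` are the primitive
`m`-th roots of unity, so `ξ` has order `m`, and then `e = m` if `m ≠ 1` while `e = ℓ` if `ξ = 1`.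
Since `Φ_f` is prime in `ℤ[X]`, it divides one factor `1 + X + ⋯ + X^{d_j - 1}`, whence `f ∣ d_j`
and so `e ℓ ∤ f`. This forces `a = 0` when `m ≠ 1`, and `a = 1` when `m = 1`. -/

open Polynomial Finset

theorem aeval_cyclotomic_int_eq_zero_iff {R : Type*} [CommRing R] (x : R) (n : ℕ) :
    aeval x (cyclotomic n ℤ) = 0 ↔ (cyclotomic n R).IsRoot x := by
  rw [aeval_def, eval₂_eq_eval_map, map_cyclotomic, IsRoot]

theorem dvd_of_cyclotomic_dvd_geom_sum {f d : ℕ} (hf : 0 < f)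
    (h : cyclotomic f ℤ ∣ ∑ i ∈ range d, (X : ℤ[X]) ^ i) : f ∣ d := by
  obtain ⟨q, hq⟩ : cyclotomic f ℤ ∣ X ^ d - 1 := h.trans ⟨X - 1, (geom_sum_mul _ _).symm⟩
  have hζ := Complex.isPrimitiveRoot_exp f hf.ne'
  have hroot := (aeval_cyclotomic_int_eq_zero_iff _ f).mpr (hζ.isRoot_cyclotomic hf)
  refine hζ.dvd_of_pow_eq_one d (sub_eq_zero.mp ?_)
  simpa [hroot] using congrArg (aeval (Complex.exp (2 * Real.pi * Complex.I / f))) hq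

theorem eq_of_geom_sum_eq_zero_iff_dvd {R : Type*} [Semiring R] {ξ : R} {c e : ℕ} (hc : c ≠ 1)
    (hiff : ∀ i, ∑ j ∈ range i, ξ ^ j = 0 ↔ c ∣ i) (he : e ≠ 0)
    (hsum : ∑ j ∈ range e, ξ ^ j = 0) (hmin : ∀ i, 2 ≤ i → i < e → ∑ j ∈ range i, ξ ^ j ≠ 0) :
    e = c := by
  have hce : c ∣ e := (hiff e).mp hsum
  have hc0 : c ≠ 0 := by rintro rfl; exact he (zero_dvd_iff.mp hce)
  by_contra hne
  exact hmin c (by omega) (lt_of_le_of_ne (Nat.le_of_dvd (by omega) hce) (Ne.symm hne))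
    ((hiff c).mpr dvd_rfl)

section GeomSum

variable {k : Type*} [Field k]

theorem IsPrimitiveRoot.geom_sum_eq_zero_iff {ξ : k} {m : ℕ} (hξ : IsPrimitiveRoot ξ m)
    (hm : m ≠ 1) (i : ℕ) : ∑ j ∈ range i, ξ ^ j = 0 ↔ m ∣ i := by
  have hξ1 : ξ ≠ 1 := by
    rintro rfl
    exact hm (hξ.unique IsPrimitiveRoot.one)
  rw [geom_sum_eq hξ1, div_eq_zero_iff, or_iff_left (sub_ne_zero.mpr hξ1), sub_eq_zero,
    hξ.pow_eq_one_iff_dvd]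

theorem geom_sum_one_eq_zero_iff (ℓ : ℕ) [CharP k ℓ] (i : ℕ) :
    ∑ j ∈ range i, (1 : k) ^ j = 0 ↔ ℓ ∣ i := by
  simp only [one_pow, sum_const, card_range, nsmul_eq_mul, mul_one]
  exact CharP.cast_eq_zero_iff k ℓ i

end GeomSum

theorem cyclotomic_root_dvd_poincare_eq_e_general {k : Type*} [Field k] (ℓ : ℕ) [CharP k ℓ]
    (hℓ : 0 < ℓ) (ξ : k)
    (e : ℕ) (he2 : 2 ≤ e) (hsum : ∑ j ∈ Finset.range e, ξ ^ j = 0)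
    (hmin : ∀ i : ℕ, 2 ≤ i → i < e → ∑ j ∈ Finset.range i, ξ ^ j ≠ 0)
    (n : ℕ) (d : Fin n → ℕ) (hdiv : ∀ j, ¬ (e * ℓ ∣ d j))
    (f : ℕ) (hf : 2 ≤ f)
    (hroot : (Polynomial.aeval ξ) (Polynomial.cyclotomic f ℤ) = 0)
    (hdvd : Polynomial.cyclotomic f ℤ ∣
      ∏ j : Fin n, ∑ i ∈ Finset.range (d j), Polynomial.X ^ i) :
    f = e := by
  have hℓp : ℓ.Prime := (CharP.char_is_prime_or_zero k ℓ).resolve_right hℓ.ne'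
  have := Fact.mk hℓp
  obtain ⟨j, -, hj⟩ := ((cyclotomic.irreducible (by omega)).prime).exists_mem_finset_dvd hdvd
  have hfe : ¬e * ℓ ∣ f := fun h ↦ hdiv j (h.trans (dvd_of_cyclotomic_dvd_geom_sum (by omega) hj))
  obtain ⟨a, m, hℓm, rfl⟩ := Nat.exists_eq_pow_mul_and_not_dvd (by omega : f ≠ 0) ℓ hℓp.one_lt.ne'
  have : NeZero (m : k) := ⟨fun h ↦ hℓm ((CharP.cast_eq_zero_iff k ℓ m).mp h)⟩
  have hξ : IsPrimitiveRoot ξ m := isRoot_cyclotomic_prime_pow_mul_iff_of_charP.mp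
    ((aeval_cyclotomic_int_eq_zero_iff ξ _).mp hroot)
  rcases eq_or_ne m 1 with rfl | hm
  · obtain rfl : ξ = 1 := IsPrimitiveRoot.one_right_iff.mp hξ
    obtain rfl := eq_of_geom_sum_eq_zero_iff_dvd hℓp.one_lt.ne' (geom_sum_one_eq_zero_iff ℓ)
      (by omega) hsum hmin
    obtain rfl : a = 1 := by
      have : a < 2 := by
        by_contra! ha
        exact hfe (by simpa [← sq] using pow_dvd_pow e ha)
      have : a ≠ 0 := by rintro rfl; simp at hf
      omega
    simp
  · obtain rfl := eq_of_geom_sum_eq_zero_iff_dvd hm (hξ.geom_sum_eq_zero_iff hm) (by omega) hsum hmin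
    obtain rfl : a = 0 := by
      by_contra! ha
      exact hfe (by rw [mul_comm]; exact mul_dvd_mul_right (dvd_pow_self ℓ ha) _)
    simp

/-- Let `k` be a field of positive characteristic `ℓ` and `ξ ∈ k` nonzero such that
`e = min {i ≥ 2 : 1 + ξ + ⋯ + ξ^{i-1} = 0}` exists.  Let `d₁, …, d_n` be positive integers
such that `e·ℓ` divides no `d_j`.  If `f ≥ 2` is such that `Φ_f(ξ) = 0` in `k` and `Φ_f`
divides `∏_j (1 + X + ⋯ + X^{d_j - 1})` in `ℤ[X]`, then `f = e`. -/
theorem cyclotomic_root_dvd_poincare_eq_e {k : Type*} [Field k] (ℓ : ℕ) [CharP k ℓ]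
    (hℓ : 0 < ℓ) (ξ : k) (hξ : ξ ≠ 0)
    (e : ℕ) (he2 : 2 ≤ e) (hsum : ∑ j ∈ Finset.range e, ξ ^ j = 0)
    (hmin : ∀ i : ℕ, 2 ≤ i → i < e → ∑ j ∈ Finset.range i, ξ ^ j ≠ 0)
    (n : ℕ) (d : Fin n → ℕ) (hd : ∀ j, 0 < d j) (hdiv : ∀ j, ¬ (e * ℓ ∣ d j))
    (f : ℕ) (hf : 2 ≤ f)
    (hroot : (Polynomial.aeval ξ) (Polynomial.cyclotomic f ℤ) = 0)
    (hdvd : Polynomial.cyclotomic f ℤ ∣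
      ∏ j : Fin n, ∑ i ∈ Finset.range (d j), Polynomial.X ^ i) :
    f = e :=
  cyclotomic_root_dvd_poincare_eq_e_general ℓ hℓ ξ e he2 hsum hmin n d hdiv f hf hroot hdvd
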